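/- arXiv:2405.01716 — 3 statements merged into one kernel-verified Lean document; each statement's English description precedes it below -/
import Mathlib

section
/- Let X be a finite nonempty record space, Θ an output type, n ≥ 1, and let M : (Fin n → X) → PMF Θ be a mechanism. Fix a prior π : PMF X, a loss function ℓ : X → X → ℝ≥0, a threshold η ≥ 0, and let κ = sup_{z0 ∈ X} Pr_{x ~ π}[ℓ(x, z0) ≤ η] be the baseline error. If M is ε-differentially private, then M is (η, γ)-ReRo with respect to π and ℓ for γ = exp(ε) · κ. -/
open scoped ENNReal NNReal BigOperators
open Function

/-- Probability that the output of a PMF lands in a set. -/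
noncomputable def pmfPr {Θ : Type*} (p : PMF Θ) (S : Set Θ) : ℝ≥0∞ :=
  p.toOuterMeasure S

/-- Probability weight of a dataset `D` under `n` i.i.d. draws from the prior `π`. -/
noncomputable def iidWeight {X : Type*} {n : ℕ} (π : PMF X) (D : Fin n → X) : ℝ≥0∞ :=
  ∏ i, π (D i)

/-- `(η, γ)`-reconstruction robustness (ReRo): for every coordinate `i`, every fixing
of the other `n-1` records, and every adversary `A`, the probability over the target
`z ~ π` placed at coordinate `i` and `θ ~ M(D[i ↦ z])` that `ℓ z (A θ) ≤ η`
is at most `γ`. -/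
def ReRo {X Θ : Type*} [Fintype X] {n : ℕ} (M : (Fin n → X) → PMF Θ)
    (π : PMF X) (ℓ : X → X → ℝ≥0) (η : ℝ≥0) (γ : ℝ≥0∞) : Prop :=
  ∀ (i : Fin n) (D : Fin n → X) (A : Θ → X),
    ∑ z : X, π z * pmfPr (M (Function.update D i z)) {θ | ℓ z (A θ) ≤ η} ≤ γ

/-- `(η, γ)`-best-case distributional reconstruction robustness (BCDistReRo):
for every adversary `A`, the probability over `D ~ π^n` and `θ ~ M(D)` that the
minimum over coordinates `i` of `ℓ (D i) (A θ)` is at most `η` is bounded by `γ`. -/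
def BCDistReRo {X Θ : Type*} [Fintype X] {n : ℕ} (M : (Fin n → X) → PMF Θ)
    (π : PMF X) (ℓ : X → X → ℝ≥0) (η : ℝ≥0) (γ : ℝ≥0∞) : Prop :=
  ∀ A : Θ → X,
    ∑ D : Fin n → X, iidWeight π D * pmfPr (M D) {θ | ∃ i, ℓ (D i) (A θ) ≤ η} ≤ γ

/-- `(η, γ)`-average distributional reconstruction robustness (AvgDistReRo):
for every adversary `A`, the probability over `D ~ π^n`, `θ ~ M(D)`, and a uniformly
random index `i` that `ℓ (D i) (A θ) ≤ η` is at most `γ`. -/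
def AvgDistReRo {X Θ : Type*} [Fintype X] {n : ℕ} (M : (Fin n → X) → PMF Θ)
    (π : PMF X) (ℓ : X → X → ℝ≥0) (η : ℝ≥0) (γ : ℝ≥0∞) : Prop :=
  ∀ A : Θ → X,
    (n : ℝ≥0∞)⁻¹ * ∑ i : Fin n, ∑ D : Fin n → X,
      iidWeight π D * pmfPr (M D) {θ | ℓ (D i) (A θ) ≤ η} ≤ γ

/-- `ε`-differential privacy: on any pair of datasets differing in at most one
coordinate, the output distributions differ multiplicatively by at most `exp ε`. -/
def DiffPrivate {X Θ : Type*} {n : ℕ} (M : (Fin n → X) → PMF Θ) (ε : ℝ) : Prop :=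
  ∀ x x' : Fin n → X, (∃ i : Fin n, ∀ j : Fin n, j ≠ i → x j = x' j) →
    ∀ S : Set Θ, pmfPr (M x) S ≤ ENNReal.ofReal (Real.exp ε) * pmfPr (M x') S

/-- The baseline error `κ_{π,ℓ}(η) = sup_{z0} Pr_{x ~ π}[ℓ(x, z0) ≤ η]`. -/
noncomputable def baseline {X : Type*} (π : PMF X) (ℓ : X → X → ℝ≥0) (η : ℝ≥0) : ℝ≥0∞ :=
  ⨆ z0 : X, pmfPr π {x | ℓ x z0 ≤ η}

/-!
Differential privacy lets us replace the output distribution `M(D[i ↦ z])` by `M(D)` at the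
cost of a factor `exp ε`. Once the output no longer depends on the target `z`, exchanging the
sums shows that the adversary's success probability is an average over `θ ~ M(D)` of
`Pr_{z ~ π}[ℓ(z, A θ) ≤ η]`, and each of these is at most the baseline `κ` (take `z0 = A θ`).
-/

theorem DiffPrivate.pmfPr_update_le {X Θ : Type*} {n : ℕ}
    {M : (Fin n → X) → PMF Θ} {ε : ℝ} (hM : DiffPrivate M ε) (D : Fin n → X) (i : Fin n)
    (z : X) (S : Set Θ) :
    pmfPr (M (Function.update D i z)) S ≤ ENNReal.ofReal (Real.exp ε) * pmfPr (M D) S :=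
  hM _ D ⟨i, fun _ hj => Function.update_of_ne hj _ _⟩ S

theorem sum_mul_pmfPr_eq_tsum_mul_pmfPr {X Θ : Type*} [Fintype X] (π : PMF X) (p : PMF Θ)
    (S : X → Set Θ) :
    ∑ z, π z * pmfPr p (S z) = ∑' θ, p θ * pmfPr π {z | θ ∈ S z} := by
  simp only [pmfPr, PMF.toOuterMeasure_apply, ← ENNReal.tsum_mul_left, tsum_fintype,
    Finset.mul_sum]
  rw [← Summable.tsum_finsetSum fun _ _ => ENNReal.summable]
  refine tsum_congr fun θ => Finset.sum_congr rfl fun z _ => ?_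
  by_cases h : θ ∈ S z <;> simp [Set.indicator, h, mul_comm]

theorem PMF.tsum_mul_le_of_forall_le {Θ : Type*} (p : PMF Θ) {f : Θ → ℝ≥0∞} {c : ℝ≥0∞}
    (h : ∀ θ, f θ ≤ c) : ∑' θ, p θ * f θ ≤ c :=
  calc ∑' θ, p θ * f θ ≤ ∑' θ, p θ * c := ENNReal.tsum_le_tsum fun θ => mul_le_mul_right (h θ) _
    _ = c := by rw [ENNReal.tsum_mul_right, p.tsum_coe, one_mul]

theorem pmfPr_le_baseline {X : Type*} (π : PMF X) (ℓ : X → X → ℝ≥0) (η : ℝ≥0) (z0 : X) :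
    pmfPr π {x | ℓ x z0 ≤ η} ≤ baseline π ℓ η :=
  le_iSup (fun z0 => pmfPr π {x | ℓ x z0 ≤ η}) z0

theorem sum_mul_pmfPr_le_baseline {X Θ : Type*} [Fintype X] (π : PMF X) (ℓ : X → X → ℝ≥0)
    (η : ℝ≥0) (p : PMF Θ) (A : Θ → X) :
    ∑ z, π z * pmfPr p {θ | ℓ z (A θ) ≤ η} ≤ baseline π ℓ η := by
  rw [sum_mul_pmfPr_eq_tsum_mul_pmfPr π p fun z => {θ | ℓ z (A θ) ≤ η}]
  exact p.tsum_mul_le_of_forall_le fun θ => pmfPr_le_baseline π ℓ η (A θ)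

theorem dp_to_rero_general {X Θ : Type*} [Fintype X] {n : ℕ}
    (M : (Fin n → X) → PMF Θ) (π : PMF X) (ℓ : X → X → ℝ≥0) (η : ℝ≥0) (ε : ℝ)
    (hM : DiffPrivate M ε) :
    ReRo M π ℓ η (ENNReal.ofReal (Real.exp ε) * baseline π ℓ η) := by
  intro i D A
  calc ∑ z, π z * pmfPr (M (Function.update D i z)) {θ | ℓ z (A θ) ≤ η}
      ≤ ∑ z, π z * (ENNReal.ofReal (Real.exp ε) * pmfPr (M D) {θ | ℓ z (A θ) ≤ η}) :=
        Finset.sum_le_sum fun z _ => mul_le_mul_right (hM.pmfPr_update_le D i z _) _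
    _ = ENNReal.ofReal (Real.exp ε) * ∑ z, π z * pmfPr (M D) {θ | ℓ z (A θ) ≤ η} := by
        simp only [Finset.mul_sum, mul_left_comm]
    _ ≤ ENNReal.ofReal (Real.exp ε) * baseline π ℓ η :=
        mul_le_mul_right (sum_mul_pmfPr_le_baseline π ℓ η (M D) A) _

/-- If `M` is `ε`-differentially private, then `M` is
`(η, exp ε · κ)`-ReRo, where `κ` is the baseline error. -/
theorem dp_to_rero {X Θ : Type*} [Fintype X] [Nonempty X] {n : ℕ} (hn : 1 ≤ n)
    (M : (Fin n → X) → PMF Θ) (π : PMF X) (ℓ : X → X → ℝ≥0) (η : ℝ≥0) (ε : ℝ)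
    (hM : DiffPrivate M ε) :
    ReRo M π ℓ η (ENNReal.ofReal (Real.exp ε) * baseline π ℓ η) :=
  dp_to_rero_general M π ℓ η ε hM
end

section
/- Let n ≥ 2, k ≥ 1, X = (Fin k → Bool), and let π be the uniform prior on X. Define the deterministic mechanism M : (Fin n → X) → PMF (Option X) by: M(D) = some (D_j) if there exists an index j such that D_i equals the all-false record for every i ≠ j (if all records are all-false, output the all-false record), and M(D) = none otherwise. Then for every adversary A : Option X → X, the probability over D ~ π^n, θ ~ M(D), and a uniformly random index i ∈ Fin n that A(θ) = D_i is at most 1/2^k + n/2^{(n−1)k}. -/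
open scoped ENNReal NNReal BigOperators
open Function

/-- The all-false (all-zero) record on `k` bits. -/
def zeroRec (k : ℕ) : Fin k → Bool := fun _ => false

/-- The separating deterministic mechanism: if there is an index `j` such that all
records other than `D j` are all-false, output `some (D j)` (when all records are
all-false this outputs the all-false record); otherwise output `none`. -/
noncomputable def sepMech (n k : ℕ) (D : Fin n → (Fin k → Bool)) :
    PMF (Option (Fin k → Bool)) :=
  if h : ∃ j : Fin n, ∀ i : Fin n, i ≠ j → D i = zeroRec k then
    PMF.pure (some (D h.choose))
  else
    PMF.pure none

/-! The mechanism reveals anything only on datasets in which at most one record differs from the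
all-false record; by a union bound over the position of that record, these have probability at
most `n * 2^(-k(n-1))`. On every other dataset the output is `none`, so the adversary's guess is
the fixed record `A none`, which equals the uniformly drawn `D i` with probability `2^(-k)`. -/

theorem PMF.sum_coe_fintype {α : Type*} [Fintype α] (p : PMF α) : ∑ a, p a = 1 := by
  rw [← tsum_fintype (L := .unconditional α)]
  exact p.tsum_coe

section IidWeight

variable {X : Type*} {n : ℕ}

theorem sum_piFinset_update_iidWeight (π : PMF X) (j : Fin n) (s u : Finset X) :
    ∑ D ∈ Fintype.piFinset (update (fun _ => u) j s), iidWeight π D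
      = (∑ x ∈ s, π x) * (∑ x ∈ u, π x) ^ (n - 1) := by
  simp only [iidWeight, ← Finset.prod_univ_sum]
  simp_rw [apply_update (fun _ t => ∑ x ∈ t, π x)]
  rw [Finset.prod_update_of_mem (Finset.mem_univ j), Finset.prod_const,
    Finset.card_univ_sdiff, Finset.card_singleton, Fintype.card_fin]

theorem sum_iidWeight_filter_apply_eq [Fintype X] [DecidableEq X] (π : PMF X) (i : Fin n) (x : X) :
    ∑ D with D i = x, iidWeight π D = π x := by
  have hcyl : ({D | D i = x} : Finset (Fin n → X))
      = Fintype.piFinset (update (fun _ => (Finset.univ : Finset X)) i {x}) := by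
    ext D
    simp only [Finset.mem_filter, Finset.mem_univ, true_and, Fintype.mem_piFinset]
    refine ⟨fun h l => ?_, fun h => by simpa using h i⟩
    rcases eq_or_ne l i with rfl | hl <;> simp_all
  rw [hcyl, sum_piFinset_update_iidWeight, Finset.sum_singleton, π.sum_coe_fintype,
    one_pow, mul_one]

theorem sum_iidWeight_filter_forall_ne_eq [Fintype X] [DecidableEq X] (π : PMF X) (j : Fin n) (z : X) :
    ∑ D with ∀ l ≠ j, D l = z, iidWeight π D = π z ^ (n - 1) := by
  have hcyl : ({D | ∀ l ≠ j, D l = z} : Finset (Fin n → X))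
      = Fintype.piFinset (update (fun _ => {z}) j Finset.univ) := by
    ext D
    simp only [Finset.mem_filter, Finset.mem_univ, true_and, Fintype.mem_piFinset]
    refine ⟨fun h l => ?_, fun h l hl => by simpa [hl] using h l⟩
    rcases eq_or_ne l j with rfl | hl <;> simp_all
  rw [hcyl, sum_piFinset_update_iidWeight, Finset.sum_singleton, π.sum_coe_fintype,
    one_mul]

end IidWeight

theorem inv_natCast_mul_sum_le {n : ℕ} {f : Fin n → ℝ≥0∞} {c : ℝ≥0∞} (hf : ∀ i, f i ≤ c) :
    (n : ℝ≥0∞)⁻¹ * ∑ i, f i ≤ c :=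
  calc (n : ℝ≥0∞)⁻¹ * ∑ i, f i ≤ (n : ℝ≥0∞)⁻¹ * (n * c) := by
        gcongr
        simpa using Finset.sum_le_sum fun i (_ : i ∈ Finset.univ) => hf i
    _ ≤ c := by
        rw [← mul_assoc]
        exact mul_le_of_le_one_left' (ENNReal.inv_mul_le_one _)

section SepMech

variable {n k : ℕ}

open Classical in
theorem pmfPr_sepMech_le (D : Fin n → (Fin k → Bool)) (S : Set (Option (Fin k → Bool))) :
    pmfPr (sepMech n k D) S
      ≤ ∑ j, (if ∀ l ≠ j, D l = zeroRec k then 1 else 0) + if none ∈ S then 1 else 0 := by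
  unfold pmfPr sepMech
  by_cases hsep : ∃ j, ∀ l ≠ j, D l = zeroRec k
  · rw [dif_pos hsep, PMF.toOuterMeasure_pure_apply]
    refine le_add_right (le_trans ?_
      (Finset.single_le_sum (fun _ _ => bot_le) (Finset.mem_univ hsep.choose)))
    rw [if_pos hsep.choose_spec]
    split_ifs <;> simp
  · rw [dif_neg hsep, PMF.toOuterMeasure_pure_apply]
    exact le_add_self

theorem sum_iidWeight_mul_pmfPr_sepMech_le (π : PMF (Fin k → Bool))
    (A : Option (Fin k → Bool) → (Fin k → Bool)) (i : Fin n) :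
    ∑ D, iidWeight π D * pmfPr (sepMech n k D) {θ | A θ = D i}
      ≤ π (A none) + n * π (zeroRec k) ^ (n - 1) := by
  calc ∑ D, iidWeight π D * pmfPr (sepMech n k D) {θ | A θ = D i}
      ≤ ∑ D, iidWeight π D * (∑ j, (if ∀ l ≠ j, D l = zeroRec k then 1 else 0)
          + if D i = A none then 1 else 0) := by
        gcongr with D
        exact (pmfPr_sepMech_le D _).trans_eq (by simp [eq_comm])
    _ = ∑ j, ∑ D with ∀ l ≠ j, D l = zeroRec k, iidWeight π D
          + ∑ D with D i = A none, iidWeight π D := by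
        simp only [mul_add, Finset.mul_sum, mul_ite, mul_one, mul_zero, Finset.sum_add_distrib,
          Finset.sum_filter]
        rw [Finset.sum_comm]
    _ = π (A none) + n * π (zeroRec k) ^ (n - 1) := by
        simp only [sum_iidWeight_filter_forall_ne_eq, sum_iidWeight_filter_apply_eq, Finset.sum_const,
          Finset.card_univ, Fintype.card_fin, nsmul_eq_mul, add_comm]

end SepMech

theorem sepMech_avg_reconstruction_bound_general (n k : ℕ) :
    ∀ A : Option (Fin k → Bool) → (Fin k → Bool),
      (n : ℝ≥0∞)⁻¹ * ∑ i : Fin n, ∑ D : Fin n → (Fin k → Bool),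
          iidWeight (PMF.uniformOfFintype (Fin k → Bool)) D *
            pmfPr (sepMech n k D) {θ | A θ = D i}
        ≤ 1 / 2 ^ k + (n : ℝ≥0∞) / 2 ^ ((n - 1) * k) := by
  intro A
  have huniform (x : Fin k → Bool) : PMF.uniformOfFintype (Fin k → Bool) x = (2 ^ k)⁻¹ := by
    simp
  refine inv_natCast_mul_sum_le fun i => ?_
  refine (sum_iidWeight_mul_pmfPr_sepMech_le _ A i).trans_eq ?_
  rw [huniform, huniform, one_div, div_eq_mul_inv, mul_comm (n - 1) k, pow_mul,
    ENNReal.inv_pow (a := 2 ^ k)]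

/-- For the separating mechanism, every adversary's probability
(over `D ~ π^n`, `θ ~ M(D)`, and a uniform index `i`) of guessing `D i` exactly
is at most `1/2^k + n/2^{(n-1)k}`. -/
theorem sepMech_avg_reconstruction_bound (n k : ℕ) (hn : 2 ≤ n) (hk : 1 ≤ k) :
    ∀ A : Option (Fin k → Bool) → (Fin k → Bool),
      (n : ℝ≥0∞)⁻¹ * ∑ i : Fin n, ∑ D : Fin n → (Fin k → Bool),
          iidWeight (PMF.uniformOfFintype (Fin k → Bool)) D *
            pmfPr (sepMech n k D) {θ | A θ = D i}
        ≤ 1 / 2 ^ k + (n : ℝ≥0∞) / 2 ^ ((n - 1) * k) :=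
  sepMech_avg_reconstruction_bound_general n k
end

section
/- Let X be a finite nonempty record space, Θ an output type, n ≥ 1, and let M : (Fin n → X) → PMF Θ be any mechanism. Let π : PMF X be a prior and suppose there exists z0 ∈ X with π(z0) ≥ 1/n. Then for the exact-match loss ℓ(x, z) = (0 if x = z, else 1) with threshold η = 0, any γ for which M is (0, γ)-BCDistReRo with respect to π and ℓ satisfies γ ≥ 1 − (1 − 1/n)^n; in particular, the constant adversary A(θ) = z0 achieves Pr_{D ~ π^n}[∃ i, D_i = z0] = 1 − (1 − π(z0))^n ≥ 1 − (1 − 1/n)^n, regardless of the mechanism's output. -/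
/-!
The constant adversary that always guesses `z0` succeeds exactly when some record of `D` equals
`z0`, whatever the mechanism outputs. Under `π^n` that event is the complement of "every record
avoids `z0`", which has probability `(1 - π z0)^n`; since `1 - (1 - p)^n` is monotone in `p`,
`π z0 ≥ 1/n` gives the bound.
-/

open scoped ENNReal NNReal BigOperators
open Function

section IidSampling

variable {X : Type*} [Fintype X] {n : ℕ}

lemma PMF.sum_coe_eq_one (π : PMF X) : ∑ x, π x = 1 := by
  simpa using π.tsum_coe

lemma PMF.sum_ite_ne_eq_one_sub [DecidableEq X] (π : PMF X) (z : X) :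
    ∑ x, (if x ≠ z then π x else 0) = 1 - π z := by
  refine ENNReal.eq_sub_of_add_eq (π.apply_ne_top z) ?_
  rw [← Finset.sum_filter, Finset.filter_ne', Finset.sum_erase_add _ _ (Finset.mem_univ z),
    π.sum_coe_eq_one]

lemma sum_iidWeight_mul_forall (π : PMF X) (p : X → Prop) [DecidablePred p] :
    ∑ D : Fin n → X, iidWeight π D * (if ∀ i, p (D i) then 1 else 0)
      = (∑ x, if p x then π x else 0) ^ n := by
  rw [Fintype.sum_pow]
  refine Finset.sum_congr rfl fun D _ => ?_
  simp [iidWeight, Fintype.prod_ite_zero]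

lemma sum_iidWeight (π : PMF X) : ∑ D : Fin n → X, iidWeight π D = 1 := by
  simpa [π.sum_coe_eq_one] using sum_iidWeight_mul_forall (n := n) π (fun _ => True)

lemma sum_iidWeight_mul_exists_eq [DecidableEq X] (π : PMF X) (z : X) :
    ∑ D : Fin n → X, iidWeight π D * (if ∃ i, D i = z then 1 else 0) = 1 - (1 - π z) ^ n := by
  have hit_add_miss : ∀ D : Fin n → X,
      (if ∃ i, D i = z then 1 else 0) + (if ∀ i, D i ≠ z then 1 else 0) = (1 : ℝ≥0∞) := by
    intro D
    by_cases h : ∃ i, D i = z <;> simp_all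
  refine ENNReal.eq_sub_of_add_eq (ENNReal.pow_ne_top (by simp)) ?_
  rw [← π.sum_ite_ne_eq_one_sub, ← sum_iidWeight_mul_forall, ← Finset.sum_add_distrib]
  simp_rw [← mul_add, hit_add_miss, mul_one]
  exact sum_iidWeight π

end IidSampling

lemma pmfPr_setOf_const {Θ : Type*} (p : PMF Θ) (P : Prop) [Decidable P] :
    pmfPr p {_θ | P} = if P then 1 else 0 := by
  by_cases h : P <;> simp [h, pmfPr, PMF.toOuterMeasure_apply]

lemma BCDistReRo.sum_iidWeight_mul_exists_eq_le {X Θ : Type*} [Fintype X] [DecidableEq X]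
    {n : ℕ} {M : (Fin n → X) → PMF Θ} {π : PMF X} {γ : ℝ≥0∞}
    (h : BCDistReRo M π (fun x z => if x = z then 0 else 1) 0 γ) (z : X) :
    ∑ D : Fin n → X, iidWeight π D * (if ∃ i, D i = z then 1 else 0) ≤ γ := by
  simpa [pmfPr_setOf_const] using h (fun _ => z)

theorem bcdistrero_baseline_lower_bound_general {X Θ : Type*} [Fintype X]
    [DecidableEq X] {n : ℕ}
    (M : (Fin n → X) → PMF Θ) (π : PMF X) (z0 : X) (hz : (n : ℝ≥0∞)⁻¹ ≤ π z0) :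
    (∀ γ : ℝ≥0∞,
      BCDistReRo M π (fun x z => if x = z then 0 else 1) 0 γ →
        1 - (1 - (n : ℝ≥0∞)⁻¹) ^ n ≤ γ)
    ∧ (∑ D : Fin n → X, iidWeight π D * (if ∃ i, D i = z0 then 1 else 0))
        = 1 - (1 - π z0) ^ n
    ∧ 1 - (1 - (n : ℝ≥0∞)⁻¹) ^ n ≤ 1 - (1 - π z0) ^ n := by
  have hmatch := sum_iidWeight_mul_exists_eq (n := n) π z0
  have hbaseline : 1 - (1 - (n : ℝ≥0∞)⁻¹) ^ n ≤ 1 - (1 - π z0) ^ n := by gcongr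
  refine ⟨fun γ hγ => ?_, hmatch, hbaseline⟩
  calc 1 - (1 - (n : ℝ≥0∞)⁻¹) ^ n ≤ 1 - (1 - π z0) ^ n := hbaseline
    _ = ∑ D : Fin n → X, iidWeight π D * (if ∃ i, D i = z0 then 1 else 0) := hmatch.symm
    _ ≤ γ := hγ.sum_iidWeight_mul_exists_eq_le z0

/-- If some record `z0` has prior mass at least `1/n`, then any `γ` for
which `M` is `(0, γ)`-BCDistReRo w.r.t. `π` and the exact-match loss satisfies
`γ ≥ 1 - (1 - 1/n)^n`; in particular the constant adversary guessing `z0` matches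
some record of `D ~ π^n` with probability exactly `1 - (1 - π z0)^n`, which is at
least `1 - (1 - 1/n)^n`, regardless of the mechanism's output. -/
theorem bcdistrero_baseline_lower_bound {X Θ : Type*} [Fintype X] [Nonempty X]
    [DecidableEq X] {n : ℕ} (hn : 1 ≤ n)
    (M : (Fin n → X) → PMF Θ) (π : PMF X) (z0 : X) (hz : (n : ℝ≥0∞)⁻¹ ≤ π z0) :
    (∀ γ : ℝ≥0∞,
      BCDistReRo M π (fun x z => if x = z then 0 else 1) 0 γ →
        1 - (1 - (n : ℝ≥0∞)⁻¹) ^ n ≤ γ)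
    ∧ (∑ D : Fin n → X, iidWeight π D * (if ∃ i, D i = z0 then 1 else 0))
        = 1 - (1 - π z0) ^ n
    ∧ 1 - (1 - (n : ℝ≥0∞)⁻¹) ^ n ≤ 1 - (1 - π z0) ^ n :=
  bcdistrero_baseline_lower_bound_general M π z0 hz
end
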